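/- Let v ≥ 1 and let T be a v²×4 array such that T restricted to columns (2,3,4) is a VOA(U_{2,3}, v), and such that the uniform distribution (X1,X2,X3,X4) on the rows of T satisfies: X2 is a function of X1, and the entropy function of (X1,X2,X3,X4) equals a·r1 + b·r2 with r1 the rank function of Û^1_{2,5} and r2 that of the wheel matroid W^{12}_2. Then a + b = log v and a = (1/v)·Σ_{i=0}^{v-1} H(α_i), where for each i ∈ {0,…,v−1}, α_i is the integer partition of v recording the multiplicities with which the distinct values of column 1 co-occur with value i in column 2. -/

import Mathlib

open Finset
open scoped BigOperators
noncomputable section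

/-- Probability, under the pmf `p` on the rows, that the columns indexed by `A` of the
array `T` agree with their values on row `r`. -/
def colProb {R : Type*} [Fintype R] (p : R → ℝ) (T : R → Fin 4 → ℕ)
    (A : Finset (Fin 4)) (r : R) : ℝ :=
  ∑ s, if ∀ i ∈ A, T s i = T r i then p s else 0

/-- The Shannon entropy `H(X_A)` of the columns of `T` indexed by `A`, where the rows
carry the pmf `p`. -/
def colEntropy {R : Type*} [Fintype R] (p : R → ℝ) (T : R → Fin 4 → ℕ)
    (A : Finset (Fin 4)) : ℝ :=
  -∑ r, p r * Real.log (colProb p T A r)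

/-- `T` is a `VOA(U_{2,3}, v)`: a `v² × 3` array over an alphabet of size `v` in which
every ordered pair of symbols occurs exactly once in each pair of distinct columns
(a Latin square of order `v` in orthogonal-array form). -/
def IsVOA23 (v : ℕ) (T : Fin (v ^ 2) → Fin 3 → Fin v) : Prop :=
  ∀ j k : Fin 3, j ≠ k → ∀ a b : Fin v,
    (Finset.univ.filter (fun r => T r j = a ∧ T r k = b)).card = 1

/-- Combine a first column `c1` (alphabet `Fin t`) with a `v²×3` array `c` into a
`v²×4` array of naturals (column `0` is `c1`, columns `1,2,3` are those of `c`). -/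
def mkT {v t : ℕ} (c1 : Fin (v ^ 2) → Fin t) (c : Fin (v ^ 2) → Fin 3 → Fin v) :
    Fin (v ^ 2) → Fin 4 → ℕ := fun r i =>
  if i = 0 then (c1 r : ℕ)
  else (c r ⟨(i : ℕ) - 1, by have h := i.isLt; omega⟩ : ℕ)

/-- Rank function of `Û^1_{2,5}` (element `1` is index `0`). -/
def rU25hat1 (A : Finset (Fin 4)) : ℝ :=
  if A = {0} then 2 else min 2 (A.card : ℝ)

/-- Rank function of the wheel matroid `W^{12}_2`: elements `1,2` (indices `0,1`)
are parallel, and each of them forms a `U_{2,3}` with elements `3,4`. -/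
def rW12 (A : Finset (Fin 4)) : ℝ :=
  if A = ∅ then 0 else if A ⊆ ({0, 1} : Finset (Fin 4)) then 1 else min 2 (A.card : ℝ)

/-- Rank function of the wheel matroid `W^{13}_2`: elements `1,3` (indices `0,2`)
are parallel. -/
def rW13 (A : Finset (Fin 4)) : ℝ :=
  if A = ∅ then 0 else if A ⊆ ({0, 2} : Finset (Fin 4)) then 1 else min 2 (A.card : ℝ)

/-! Each symbol occurs exactly `v` times in every column of a Latin square, so `X2` is uniform
and `H(X2) = log v`; evaluating the rank identity at `{2}` gives `a + b = log v`. At `{1, 2}` the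
ranks are `2` and `1`, so `a = H(X1, X2) - H(X2) = H(X1 | X2)`, and since `X2` is uniform this
conditional entropy is the average over `i` of the entropies of the partitions `α_i`. -/

open Real

section UniformEntropy

variable {R β : Type*} [Fintype R] [DecidableEq β]

lemma colProb_uniform_eq (T : R → Fin 4 → ℕ) (A : Finset (Fin 4)) (g : R → β)
    (hg : ∀ r s, (∀ i ∈ A, T s i = T r i) ↔ g s = g r) (r : R) :
    colProb (fun _ => (Fintype.card R : ℝ)⁻¹) T A r
      = (#{s | g s = g r} : ℝ) / Fintype.card R := by
  simp only [colProb, hg, ← Finset.sum_filter, Finset.sum_const, nsmul_eq_mul, div_eq_mul_inv]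

theorem colEntropy_uniform_eq_sum_negMulLog [Fintype β] (T : R → Fin 4 → ℕ)
    (A : Finset (Fin 4)) (g : R → β) (hg : ∀ r s, (∀ i ∈ A, T s i = T r i) ↔ g s = g r) :
    colEntropy (fun _ => (Fintype.card R : ℝ)⁻¹) T A
      = ∑ b, negMulLog ((#{r | g r = b} : ℝ) / Fintype.card R) := by
  simp only [colEntropy, colProb_uniform_eq T A g hg]
  rw [← Finset.sum_fiberwise' univ g (fun b => (Fintype.card R : ℝ)⁻¹
    * log ((#{r | g r = b} : ℝ) / Fintype.card R)), ← Finset.sum_neg_distrib]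
  refine Finset.sum_congr rfl fun b _ => ?_
  rw [Finset.sum_const, nsmul_eq_mul, negMulLog]
  ring

end UniformEntropy

lemma mul_negMulLog_inv (x : ℝ) : x * negMulLog x⁻¹ = log x := by
  rcases eq_or_ne x 0 with rfl | hx
  · simp
  · rw [negMulLog, log_inv]
    field_simp

/-- The chain rule `H(X, Y) = H(Y) + H(X | Y)` for the joint counts `n y x`, `Y` being uniform. -/
theorem sum_negMulLog_eq_log_add_condEntropy {ι κ : Type*} [Fintype ι] [Fintype κ]
    (n : ι → κ → ℕ) {m : ℕ} (hm : m ≠ 0) (hn : ∀ y, ∑ x, n y x = m) :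
    ∑ y, ∑ x, negMulLog ((n y x : ℝ) / (Fintype.card ι * m))
      = log (Fintype.card ι)
        + (Fintype.card ι : ℝ)⁻¹ * ∑ y, ∑ x, negMulLog ((n y x : ℝ) / m) := by
  set k := Fintype.card ι
  have hsplit : ∀ y x, negMulLog ((n y x : ℝ) / (k * m))
      = (k : ℝ)⁻¹ * negMulLog ((n y x : ℝ) / m)
        + (n y x : ℝ) / m * negMulLog (k : ℝ)⁻¹ := by
    intro y x
    rw [← negMulLog_mul]
    ring_nf
  have hrow : ∀ y, ∑ x, (n y x : ℝ) / m = 1 := by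
    intro y
    rw [← Finset.sum_div, ← Nat.cast_sum, hn y, div_self (by exact_mod_cast hm)]
  calc ∑ y, ∑ x, negMulLog ((n y x : ℝ) / (k * m))
      = ∑ y, ((k : ℝ)⁻¹ * ∑ x, negMulLog ((n y x : ℝ) / m)
          + negMulLog (k : ℝ)⁻¹) := by
        simp only [hsplit, Finset.sum_add_distrib, ← Finset.mul_sum, ← Finset.sum_mul, hrow,
          one_mul]
    _ = _ := by
        rw [Finset.sum_add_distrib, ← Finset.mul_sum, Finset.sum_const, Finset.card_univ,
          nsmul_eq_mul, mul_negMulLog_inv, add_comm]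

section VOA

variable {v : ℕ} {c : Fin (v ^ 2) → Fin 3 → Fin v}

lemma IsVOA23.card_filter_eq (hVOA : IsVOA23 v c) (j : Fin 3) (a : Fin v) :
    #{r | c r j = a} = v := by
  obtain ⟨k, hkj⟩ : ∃ k, k ≠ j := ⟨j + 1, by fin_cases j <;> decide⟩
  rw [Finset.card_eq_sum_card_fiberwise (f := fun r => c r k) (t := univ)
    (fun _ _ => mem_univ _)]
  simp [Finset.filter_filter, hVOA j k hkj.symm a]

lemma IsVOA23.sum_card_filter_eq {t : ℕ} (hVOA : IsVOA23 v c) (c1 : Fin (v ^ 2) → Fin t)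
    (j : Fin 3) (a : Fin v) :
    ∑ x : Fin t, #{r | c1 r = x ∧ c r j = a} = v := by
  have hfib := Finset.card_eq_sum_card_fiberwise (s := {r | c r j = a}) (f := c1) (t := univ)
    (fun _ _ => mem_univ _)
  rw [hVOA.card_filter_eq j a] at hfib
  simp only [hfib, Finset.filter_filter, and_comm]

end VOA

lemma rU25hat1_one : rU25hat1 {1} = 1 := by norm_num [rU25hat1]

lemma rW12_one : rW12 {1} = 1 := by norm_num [rW12]

lemma rU25hat1_zero_one : rU25hat1 {0, 1} = 2 := by norm_num [rU25hat1]

lemma rW12_zero_one : rW12 {0, 1} = 1 := by norm_num [rW12]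

theorem statement12_general (v t : ℕ) (hv : 1 ≤ v)
    (c1 : Fin (v ^ 2) → Fin t) (c : Fin (v ^ 2) → Fin 3 → Fin v)
    (hVOA : IsVOA23 v c)
    (a b : ℝ)
    (hEnt : ∀ A : Finset (Fin 4),
      colEntropy (fun _ => ((v ^ 2 : ℕ) : ℝ)⁻¹) (mkT c1 c) A
        = a * rU25hat1 A + b * rW12 A) :
    a + b = Real.log v ∧
    a = (v : ℝ)⁻¹ * ∑ i : Fin v, (-∑ j : Fin t,
        (((Finset.univ.filter (fun r => c1 r = j ∧ c r 0 = i)).card : ℝ) / v) *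
          Real.log (((Finset.univ.filter (fun r => c1 r = j ∧ c r 0 = i)).card : ℝ) / v)) := by
  have hv0 : v ≠ 0 := Nat.one_le_iff_ne_zero.mp hv
  have hH2 : colEntropy (fun _ => ((v ^ 2 : ℕ) : ℝ)⁻¹) (mkT c1 c) {1} = log v := by
    have h := colEntropy_uniform_eq_sum_negMulLog (mkT c1 c) {1} (fun r => c r 0)
      (by simp [mkT, Fin.val_inj])
    simp only [Fintype.card_fin, hVOA.card_filter_eq] at h
    have hinv : (v : ℝ) / (v ^ 2 : ℕ) = (v : ℝ)⁻¹ := by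
      push_cast
      field_simp
    rw [h, Finset.sum_const, Finset.card_univ, Fintype.card_fin, nsmul_eq_mul, hinv,
      mul_negMulLog_inv]
  have hH12 : colEntropy (fun _ => ((v ^ 2 : ℕ) : ℝ)⁻¹) (mkT c1 c) {0, 1}
      = log v + (v : ℝ)⁻¹ * ∑ i : Fin v, ∑ j : Fin t,
        negMulLog ((#{r | c1 r = j ∧ c r 0 = i} : ℝ) / v) := by
    have h := colEntropy_uniform_eq_sum_negMulLog (mkT c1 c) {0, 1} (fun r => (c r 0, c1 r))
      (by simp [mkT, Fin.val_inj, and_comm])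
    have hchain := sum_negMulLog_eq_log_add_condEntropy
      (fun (i : Fin v) (j : Fin t) => #{r | c1 r = j ∧ c r 0 = i}) hv0
      (hVOA.sum_card_filter_eq c1 0)
    simp only [Fintype.card_fin] at h hchain
    rw [h, Fintype.sum_prod_type, ← hchain]
    push_cast [sq]
    simp only [Prod.mk.injEq, and_comm]
  have hsum := hEnt {1}
  have hpair := hEnt {0, 1}
  rw [hH2, rU25hat1_one, rW12_one] at hsum
  rw [hH12, rU25hat1_zero_one, rW12_zero_one] at hpair
  refine ⟨by linarith, ?_⟩
  simp only [negMulLog_eq_neg, Finset.sum_neg_distrib] at hpair ⊢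
  linarith

/-- Let `T` be a `v²×4` array whose columns `2,3,4` form a `VOA(U_{2,3}, v)` and such
that, under the uniform distribution on rows, column `2` is a function of column `1`
and the entropy function equals `a·r(Û^1_{2,5}) + b·r(W^{12}_2)`.  Then
`a + b = log v` and `a = (1/v) Σ_i H(α_i)` where `α_i` records the multiplicities with
which the distinct values of column `1` co-occur with value `i` in column `2`. -/
theorem statement12 (v t : ℕ) (hv : 1 ≤ v)
    (c1 : Fin (v ^ 2) → Fin t) (c : Fin (v ^ 2) → Fin 3 → Fin v)
    (hVOA : IsVOA23 v c)
    (hfun : ∀ r r' : Fin (v ^ 2), c1 r = c1 r' → c r 0 = c r' 0)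
    (a b : ℝ)
    (hEnt : ∀ A : Finset (Fin 4),
      colEntropy (fun _ => ((v ^ 2 : ℕ) : ℝ)⁻¹) (mkT c1 c) A
        = a * rU25hat1 A + b * rW12 A) :
    a + b = Real.log v ∧
    a = (v : ℝ)⁻¹ * ∑ i : Fin v, (-∑ j : Fin t,
        (((Finset.univ.filter (fun r => c1 r = j ∧ c r 0 = i)).card : ℝ) / v) *
          Real.log (((Finset.univ.filter (fun r => c1 r = j ∧ c r 0 = i)).card : ℝ) / v)) :=
  statement12_general v t hv c1 c hVOA a b hEnt
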